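/- arXiv:1610.04185 — 3 statements merged into one kernel-verified Lean document; each statement's English description precedes it below -/
import Mathlib

section
/- Let A and B be commutative rings, φ : B → A a ring homomorphism, and π : A → B an additive map satisfying the projection formula π(φ(b)·a) = b·π(a) for all a ∈ A and b ∈ B. Let ℓ ≥ 1 be an integer and let c₀, c₁, …, c₂ℓ be elements of A. Set x₂ = φ(π(1)) − c_ℓ and x₃ = φ(π(x₂)) − 2·c_ℓ·x₂ + Σ_{j=1}^{ℓ} 2^j · c_{ℓ−j} · c_{ℓ+j}. Then π(x₃) = π(1)³ − 3·π(c_ℓ)·π(1) + 2·π(c_ℓ²) + Σ_{j=1}^{ℓ} 2^j · π(c_{ℓ−j}·c_{ℓ+j}). -/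
/-- Algebraic triple point formula (Corollary 3.4): with `φ` modelling pullback, `π` modelling
pushforward satisfying the projection formula, `ℓ ≥ 1`, and classes `c 0, …, c (2ℓ)`,
setting `x₂ = φ (π 1) - c ℓ` and
`x₃ = φ (π x₂) - 2 * c ℓ * x₂ + ∑_{j=1}^{ℓ} 2^j * c (ℓ-j) * c (ℓ+j)`, one has
`π x₃ = (π 1)^3 - 3 * π (c ℓ) * π 1 + 2 * π (c ℓ ^ 2) + ∑_{j=1}^{ℓ} 2^j * π (c (ℓ-j) * c (ℓ+j))`. -/
theorem stmt_1 {A B : Type*} [CommRing A] [CommRing B]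
    (φ : B →+* A) (π : A →+ B)
    (proj : ∀ (a : A) (b : B), π (φ b * a) = b * π a)
    (ℓ : ℕ) (hℓ : 1 ≤ ℓ) (c : ℕ → A) :
    π (φ (π (φ (π 1) - c ℓ)) - 2 * c ℓ * (φ (π 1) - c ℓ)
        + ∑ j ∈ Finset.Icc 1 ℓ, (2 : A) ^ j * c (ℓ - j) * c (ℓ + j))
      = (π 1) ^ 3 - 3 * π (c ℓ) * π 1 + 2 * π (c ℓ ^ 2)
        + ∑ j ∈ Finset.Icc 1 ℓ, (2 : B) ^ j * π (c (ℓ - j) * c (ℓ + j)) := by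

  have key : ∀ b : B, π (φ b) = b * π 1 := fun b => by simpa using proj 1 b
  have hx2 : π (φ (π 1) - c ℓ) = π 1 * π 1 - π (c ℓ) := by
    rw [map_sub, key]
  have hT1 : π (φ (π (φ (π 1) - c ℓ))) = (π 1 * π 1 - π (c ℓ)) * π 1 := by
    rw [key, hx2]
  have hT2 : π (2 * c ℓ * (φ (π 1) - c ℓ)) = 2 * π 1 * π (c ℓ) - 2 * π (c ℓ ^ 2) := by
    have e : 2 * c ℓ * (φ (π 1) - c ℓ)
        = φ (2 * π 1) * c ℓ - φ (2 : B) * c ℓ ^ 2 := by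
      simp only [map_mul, map_ofNat]
      ring
    rw [e, map_sub, proj, proj]
  have hT3 : π (∑ j ∈ Finset.Icc 1 ℓ, (2 : A) ^ j * c (ℓ - j) * c (ℓ + j))
      = ∑ j ∈ Finset.Icc 1 ℓ, (2 : B) ^ j * π (c (ℓ - j) * c (ℓ + j)) := by
    rw [map_sum]
    refine Finset.sum_congr rfl fun j _ => ?_
    have e : (2 : A) ^ j * c (ℓ - j) * c (ℓ + j)
        = φ ((2 : B) ^ j) * (c (ℓ - j) * c (ℓ + j)) := by
      simp only [map_pow, map_ofNat]
      ring
    rw [e, proj]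
  rw [map_add, map_sub, hT1, hT2, hT3]
  ring
end

section
/- For every natural number r and all rational numbers χ, s, and κ, one has (1/2)χ² + χ(−r² + 1/2) + κ(−r⁴/24 + r³/12 + r²/24 − r/12) + s(−r³/6 + r/6) + r⁴/4 − r²/4 = C(χ, 2) − (r² − 1)χ − binom(r+1, 3)·s − binom(r+1, 4)·κ + (1/2)·binom(r², 2), where C(x, k) := x(x−1)⋯(x−k+1)/k! denotes the generalized binomial coefficient for x ∈ ℚ and k ∈ ℕ, and binom denotes the ordinary binomial coefficient of natural numbers. -/
/-- The generalized binomial coefficient `C(x, k) = x(x-1)⋯(x-k+1)/k!` for `x ∈ ℚ`, `k ∈ ℕ`. -/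
def qchoose (x : ℚ) (k : ℕ) : ℚ := (∏ i ∈ Finset.range k, (x - i)) / (Nat.factorial k)

lemma prod_range_natCast_sub (n k : ℕ) :
    ∏ i ∈ Finset.range k, ((n : ℚ) - i) = n.descFactorial k := by
  rw [← descPochhammer_eval_eq_prod_range, descPochhammer_eval_eq_descFactorial]

lemma qchoose_natCast (n k : ℕ) : qchoose n k = n.choose k := by
  rw [qchoose, prod_range_natCast_sub, Nat.descFactorial_eq_factorial_mul_choose, Nat.cast_mul,
    mul_div_cancel_left₀ _ (Nat.cast_ne_zero.mpr k.factorial_ne_zero)]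

/-- Verification of Theorem A for n = 2 and arbitrary rank r: the general double point
formula `y₂` equals the Euler characteristic
`C(χ, 2) - (r² - 1)χ - binom(r+1,3)·s - binom(r+1,4)·κ + (1/2)·binom(r²,2)`. -/
theorem stmt_6 (r : ℕ) (χ s κ : ℚ) :
    (1 / 2) * χ ^ 2 + χ * (-(r : ℚ) ^ 2 + 1 / 2)
      + κ * (-(r : ℚ) ^ 4 / 24 + (r : ℚ) ^ 3 / 12 + (r : ℚ) ^ 2 / 24 - (r : ℚ) / 12)
      + s * (-(r : ℚ) ^ 3 / 6 + (r : ℚ) / 6)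
      + (r : ℚ) ^ 4 / 4 - (r : ℚ) ^ 2 / 4
    = qchoose χ 2 - ((r : ℚ) ^ 2 - 1) * χ - (Nat.choose (r + 1) 3 : ℚ) * s
      - (Nat.choose (r + 1) 4 : ℚ) * κ + (1 / 2) * (Nat.choose (r ^ 2) 2 : ℚ) := by
  rw [← qchoose_natCast, ← qchoose_natCast, ← qchoose_natCast]
  simp only [qchoose, Finset.prod_range_succ, Finset.prod_range_zero, Nat.factorial]
  push_cast
  ring
end

section
/- Let r ∈ ℚ and let G, F, A, B, H, J be formal power series in ℚ⟦z⟧, each with constant coefficient 1 (hence units), such that: the coefficients of z¹ and z² in G are 1 and 1 − r²; the coefficients of z¹ and z² in F are 0 and (r⁴ − r²)/2; the coefficients of z¹ and z² in A are 0 and −(r³ − r)/6; the coefficients of z¹ and z² in B are 0 and (r² − r⁴)/24; and H² = F, J² = A. Then for all integers χ, s, κ, the coefficient of z² in the power series G^χ · H · A^s · J^{−κ} · B^κ (integer powers of units) equals χ(χ−1)/2 − (r² − 1)χ − ((r³ − r)/6)·s − ((r⁴ − 2r³ − r² + 2r)/24)·κ + (r⁴ − r²)/4. -/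
/-! The truncated logarithm `f ↦ (ℓ₁, ℓ₂)`, `log (f / f(0)) = ℓ₁ z + ℓ₂ z² + O(z³)`, is a
homomorphism from the units of `K⟦z⟧` to the additive group `K × K`. It turns the product into
the linear combination `χ ℓ(G) + ℓ(F)/2 + s ℓ(A) − κ ℓ(A)/2 + κ ℓ(B)`, and the coefficient of `z²`
of a series with constant coefficient `1` is recovered as `ℓ₂ + ℓ₁²/2`. -/

open PowerSeries

namespace PowerSeries

theorem coeff_two_mul {R : Type*} [CommSemiring R] (f g : R⟦X⟧) :
    coeff 2 (f * g) =
      constantCoeff f * coeff 2 g + coeff 1 f * coeff 1 g + coeff 2 f * constantCoeff g := by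
  simp [coeff_mul, Finset.Nat.antidiagonal_succ, add_assoc]

section Field

variable {K : Type*} [Field K]

theorem constantCoeff_units_zpow (U : K⟦X⟧ˣ) (n : ℤ) :
    constantCoeff ((U ^ n : K⟦X⟧ˣ) : K⟦X⟧) = constantCoeff (U : K⟦X⟧) ^ n := by
  have := congrArg Units.val (map_zpow (Units.map constantCoeff.toMonoidHom) U n)
  rwa [Units.val_zpow_eq_zpow_val, Units.coe_map, Units.coe_map] at this

noncomputable def logCoeffs (f : K⟦X⟧) : K × K :=
  let a := coeff 1 f / constantCoeff f
  (a, coeff 2 f / constantCoeff f - a ^ 2 / 2)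

theorem logCoeffs_eq_of_coeff {f : K⟦X⟧} {a b : K} (h0 : constantCoeff f = 1)
    (h1 : coeff 1 f = a) (h2 : coeff 2 f = b) : logCoeffs f = (a, b - a ^ 2 / 2) := by
  simp [logCoeffs, h0, h1, h2]

theorem coeff_two_eq_of_constantCoeff_eq_one {f : K⟦X⟧} (hf : constantCoeff f = 1) :
    coeff 2 f = (logCoeffs f).2 + (logCoeffs f).1 ^ 2 / 2 := by
  simp [logCoeffs_eq_of_coeff hf rfl rfl]

section NeZeroTwo

variable [NeZero (2 : K)]

theorem logCoeffs_mul {f g : K⟦X⟧} (hf : constantCoeff f ≠ 0) (hg : constantCoeff g ≠ 0) :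
    logCoeffs (f * g) = logCoeffs f + logCoeffs g := by
  simp only [logCoeffs, coeff_one_mul, coeff_two_mul, map_mul, Prod.mk_add_mk, Prod.mk.injEq]
  exact ⟨by field_simp, by field_simp; ring⟩

noncomputable def logCoeffsHom : K⟦X⟧ˣ →* Multiplicative (K × K) where
  toFun U := .ofAdd (logCoeffs U)
  map_one' := by simp [logCoeffs]
  map_mul' U V := logCoeffs_mul (isUnit_constantCoeff _ U.isUnit).ne_zero
    (isUnit_constantCoeff _ V.isUnit).ne_zero

theorem logCoeffs_units_mul (U V : K⟦X⟧ˣ) :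
    logCoeffs ((U * V : K⟦X⟧ˣ) : K⟦X⟧) = logCoeffs U + logCoeffs V :=
  congrArg Multiplicative.toAdd (map_mul logCoeffsHom U V)

theorem logCoeffs_units_pow (U : K⟦X⟧ˣ) (n : ℕ) :
    logCoeffs ((U ^ n : K⟦X⟧ˣ) : K⟦X⟧) = n • logCoeffs U :=
  congrArg Multiplicative.toAdd (map_pow logCoeffsHom U n)

theorem logCoeffs_units_zpow (U : K⟦X⟧ˣ) (n : ℤ) :
    logCoeffs ((U ^ n : K⟦X⟧ˣ) : K⟦X⟧) = n • logCoeffs U :=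
  congrArg Multiplicative.toAdd (map_zpow logCoeffsHom U n)

theorem logCoeffs_eq_inv_smul_of_units_pow_eq {U V : K⟦X⟧ˣ} {n : ℕ}
    (hn : (n : K) ≠ 0) (h : U ^ n = V) : logCoeffs (U : K⟦X⟧) = (n : K)⁻¹ • logCoeffs V := by
  rw [← h, logCoeffs_units_pow, ← Nat.cast_smul_eq_nsmul K, smul_smul, inv_mul_cancel₀ hn,
    one_smul]

end NeZeroTwo

end Field

end PowerSeries

/-- Extraction of the n = 2 Euler characteristic formula from the Ellingsrud–Göttsche–Lehn
generating series: if `G, F, A, B, H, J` are unit power series over `ℚ` with constant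
coefficient 1, with the prescribed coefficients of `z¹` and `z²`, and with `H² = F`, `J² = A`,
then for all integers `χ, s, κ` the coefficient of `z²` in `G^χ · H · A^s · J^(−κ) · B^κ` is
`χ(χ−1)/2 − (r²−1)χ − ((r³−r)/6)s − ((r⁴−2r³−r²+2r)/24)κ + (r⁴−r²)/4`. -/
theorem stmt_8 (r : ℚ) (G F A B H J : (PowerSeries ℚ)ˣ)
    (hG0 : constantCoeff (G : PowerSeries ℚ) = 1)
    (hF0 : constantCoeff (F : PowerSeries ℚ) = 1)
    (hA0 : constantCoeff (A : PowerSeries ℚ) = 1)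
    (hB0 : constantCoeff (B : PowerSeries ℚ) = 1)
    (hH0 : constantCoeff (H : PowerSeries ℚ) = 1)
    (hJ0 : constantCoeff (J : PowerSeries ℚ) = 1)
    (hG1 : coeff 1 (G : PowerSeries ℚ) = 1)
    (hG2 : coeff 2 (G : PowerSeries ℚ) = 1 - r ^ 2)
    (hF1 : coeff 1 (F : PowerSeries ℚ) = 0)
    (hF2 : coeff 2 (F : PowerSeries ℚ) = (r ^ 4 - r ^ 2) / 2)
    (hA1 : coeff 1 (A : PowerSeries ℚ) = 0)
    (hA2 : coeff 2 (A : PowerSeries ℚ) = -(r ^ 3 - r) / 6)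
    (hB1 : coeff 1 (B : PowerSeries ℚ) = 0)
    (hB2 : coeff 2 (B : PowerSeries ℚ) = (r ^ 2 - r ^ 4) / 24)
    (hH : H ^ 2 = F) (hJ : J ^ 2 = A)
    (χ s κ : ℤ) :
    coeff 2 ((G ^ χ * H * A ^ s * J ^ (-κ) * B ^ κ : (PowerSeries ℚ)ˣ) : PowerSeries ℚ)
      = (χ : ℚ) * ((χ : ℚ) - 1) / 2 - (r ^ 2 - 1) * (χ : ℚ) - ((r ^ 3 - r) / 6) * (s : ℚ)
        - ((r ^ 4 - 2 * r ^ 3 - r ^ 2 + 2 * r) / 24) * (κ : ℚ) + (r ^ 4 - r ^ 2) / 4 := by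
  have hP0 : constantCoeff ((G ^ χ * H * A ^ s * J ^ (-κ) * B ^ κ : ℚ⟦X⟧ˣ) : ℚ⟦X⟧) = 1 := by
    simp [constantCoeff_units_zpow, hG0, hH0, hA0, hJ0, hB0]
  have hℓH := logCoeffs_eq_inv_smul_of_units_pow_eq two_ne_zero hH
  have hℓJ := logCoeffs_eq_inv_smul_of_units_pow_eq two_ne_zero hJ
  rw [logCoeffs_eq_of_coeff hF0 hF1 hF2] at hℓH
  rw [logCoeffs_eq_of_coeff hA0 hA1 hA2] at hℓJ
  simp only [coeff_two_eq_of_constantCoeff_eq_one hP0, logCoeffs_units_mul, logCoeffs_units_zpow,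
    logCoeffs_eq_of_coeff hG0 hG1 hG2, logCoeffs_eq_of_coeff hA0 hA1 hA2,
    logCoeffs_eq_of_coeff hB0 hB1 hB2, hℓH, hℓJ]
  simp only [Prod.smul_mk, Prod.mk_add_mk, smul_eq_mul, zsmul_eq_mul, Int.cast_neg]
  ring
end
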